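/- arXiv:2307.06710 — 8 statements merged into one kernel-verified Lean document; each statement's English description precedes it below -/
import Mathlib

section
/- Let ρ be a quantum state and A1, A4 Hermitian involutions on a Hilbert space. If the sequential correlation (1/2)·tr(ρ{A1,A4}) equals 1, then A1A4|ψ⟩ = A4A1|ψ⟩ = |ψ⟩ for ρ = |ψ⟩⟨ψ|. -/
open scoped InnerProductSpace

lemma tr_rank_one' {H : Type*} [NormedAddCommGroup H] [InnerProductSpace ℂ H]
    [FiniteDimensional ℂ H] (B : H →L[ℂ] H) (ψ : H) :
    LinearMap.trace ℂ H (((innerSL ℂ ψ).smulRight ψ * B).toLinearMap) = ⟪ψ, B ψ⟫_ℂ := by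
  have h : ((innerSL ℂ ψ).smulRight ψ * B).toLinearMap
      = dualTensorHom ℂ H H ((((innerSL ℂ ψ).comp B).toLinearMap) ⊗ₜ ψ) := by
    ext x; simp [dualTensorHom_apply]
  rw [h, LinearMap.trace_eq_contract_apply]
  simp

/-- If the sequential correlation (1/2)·tr(ρ{A1,A4}) equals 1 for ρ = |ψ⟩⟨ψ| and
Hermitian involutions A1, A4, then A1A4|ψ⟩ = A4A1|ψ⟩ = |ψ⟩. -/
theorem stmt_2 {H : Type*} [NormedAddCommGroup H] [InnerProductSpace ℂ H]
    [FiniteDimensional ℂ H]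
    (A1 A4 : H →L[ℂ] H)
    (hA1 : IsSelfAdjoint A1) (hA1inv : A1 * A1 = 1)
    (hA4 : IsSelfAdjoint A4) (hA4inv : A4 * A4 = 1)
    (ψ : H) (hψ : ‖ψ‖ = 1)
    (ρ : H →L[ℂ] H) (hρ : ρ = (innerSL ℂ ψ).smulRight ψ)
    (hcorr : (1 / 2 : ℂ) *
      LinearMap.trace ℂ H ((ρ * (A1 * A4 + A4 * A1)).toLinearMap) = 1) :
    A1 (A4 ψ) = ψ ∧ A4 (A1 ψ) = ψ := by
  subst hρ
  rw [tr_rank_one'] at hcorr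
  set u := A1 ψ with hu
  set v := A4 ψ with hv
  have hA1ψ : A1 u = ψ := by
    have := congrArg (fun T => T ψ) hA1inv; simpa using this
  have hA4ψ : A4 v = ψ := by
    have := congrArg (fun T => T ψ) hA4inv; simpa using this
  have hadj1 : ∀ x y : H, ⟪ψ, A1 x⟫_ℂ = ⟪u, x⟫_ℂ := by
    intro x y
    rw [hu, ← ContinuousLinearMap.adjoint_inner_left, hA1.adjoint_eq]
  have hadj4 : ∀ x : H, ⟪ψ, A4 x⟫_ℂ = ⟪v, x⟫_ℂ := by
    intro x
    rw [hv, ← ContinuousLinearMap.adjoint_inner_left, hA4.adjoint_eq]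
  have hnu : ‖u‖ = 1 := by
    have h1 : ⟪u, u⟫_ℂ = 1 := by
      rw [← ContinuousLinearMap.adjoint_inner_left, hA1.adjoint_eq, hu, hA1ψ]
      rw [inner_self_eq_norm_sq_to_K, hψ]; norm_num
    have h2 := inner_self_eq_norm_sq_to_K (𝕜 := ℂ) u
    rw [h1] at h2
    norm_num at h2
    have h3 : ‖u‖ ^ 2 = 1 := by exact_mod_cast h2.symm
    nlinarith [norm_nonneg u]
  have hnv : ‖v‖ = 1 := by
    have h1 : ⟪v, v⟫_ℂ = 1 := by
      rw [← ContinuousLinearMap.adjoint_inner_left, hA4.adjoint_eq, hv, hA4ψ]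
      rw [inner_self_eq_norm_sq_to_K, hψ]; norm_num
    have h2 := inner_self_eq_norm_sq_to_K (𝕜 := ℂ) v
    rw [h1] at h2
    norm_num at h2
    have h3 : ‖v‖ ^ 2 = 1 := by exact_mod_cast h2.symm
    nlinarith [norm_nonneg v]
  have hsum : ⟪u, v⟫_ℂ + ⟪v, u⟫_ℂ = 2 := by
    have hh : ⟪ψ, (A1 * A4 + A4 * A1) ψ⟫_ℂ = ⟪u, v⟫_ℂ + ⟪v, u⟫_ℂ := by
      simp only [ContinuousLinearMap.add_apply, ContinuousLinearMap.mul_apply,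
        inner_add_right]
      rw [hadj1 (A4 ψ) ψ, hadj4 (A1 ψ)]
    rw [hh] at hcorr
    linear_combination 2 * hcorr
  have hconj : ⟪v, u⟫_ℂ = (starRingEnd ℂ) ⟪u, v⟫_ℂ := (inner_conj_symm v u).symm
  have hre : (⟪u, v⟫_ℂ).re = 1 := by
    have h := congrArg Complex.re hsum
    have h2 : (⟪v, u⟫_ℂ).re = (⟪u, v⟫_ℂ).re := by rw [hconj]; exact Complex.conj_re _
    simp [Complex.add_re] at h
    linarith
  have hcs : ‖⟪u, v⟫_ℂ‖ ≤ 1 := by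
    calc ‖⟪u, v⟫_ℂ‖ ≤ ‖u‖ * ‖v‖ := norm_inner_le_norm u v
    _ = 1 := by rw [hnu, hnv]; ring
  have him : (⟪u, v⟫_ℂ).im = 0 := by
    have e1 : ‖⟪u, v⟫_ℂ‖ = ‖⟪u, v⟫_ℂ‖ := rfl
    have e2 := Complex.sq_norm ⟪u, v⟫_ℂ
    have e3 := Complex.normSq_apply ⟪u, v⟫_ℂ
    nlinarith [hcs, norm_nonneg ⟪u, v⟫_ℂ, hre]
  have hone : ⟪u, v⟫_ℂ = 1 := Complex.ext (by simp [hre]) (by simp [him])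
  have huv : u = v := (inner_eq_one_iff_of_norm_eq_one hnu hnv).mp hone
  constructor
  · show A1 v = ψ
    rw [← huv, hA1ψ]
  · show A4 u = ψ
    rw [huv, hA4ψ]
end

section
/- Let A1,...,A6 be Hermitian involutions on a Hilbert space H and |ψ⟩ a unit vector satisfying A_iA_jA_k|ψ⟩ = |ψ⟩ for all permutations (i,j,k) of (1,2,3) and of (4,5,6), A1A4|ψ⟩ = A4A1|ψ⟩ = |ψ⟩, A2A5|ψ⟩ = A5A2|ψ⟩ = |ψ⟩, and A3A6|ψ⟩ = A6A3|ψ⟩ = -|ψ⟩. Then {A1,A5}|ψ⟩ = 0. -/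
/-! Each stabilizer relation, multiplied on the left by an involution, moves one operator across
`ψ`: `A1 A5 ψ = A1 A2 ψ = A3 ψ` and `A5 A1 ψ = A5 A4 ψ = A6 ψ = -A3 ψ`. -/

theorem apply_eq_of_mul_apply_eq {F α : Type*} [FunLike F α α] [Mul F] [One F]
    [IsMulApplyEqComp F α] [IsOneApplyEqSelf F α] {u v : F} (hu : u * u = 1) {x y : α}
    (h : (u * v) x = y) : v x = u y := by
  rw [← h, mul_apply_eq_comp, ← mul_apply_eq_comp u u, hu, one_apply_eq_self]

theorem stmt_3_general {H : Type*} [NormedAddCommGroup H] [InnerProductSpace ℂ H]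
    (A1 A2 A3 A4 A5 A6 : H →L[ℂ] H)
    (hinv1 : A1 * A1 = 1) (hinv2 : A2 * A2 = 1)
    (hinv4 : A4 * A4 = 1) (hinv6 : A6 * A6 = 1)
    (ψ : H)
    (h213 : (A2 * A1 * A3) ψ = ψ)
    (h654 : (A6 * A5 * A4) ψ = ψ)
    (h41 : (A4 * A1) ψ = ψ)
    (h25 : (A2 * A5) ψ = ψ)
    (h63 : (A6 * A3) ψ = -ψ) :
    (A1 * A5 + A5 * A1) ψ = 0 := by
  have e5 : A5 ψ = A2 ψ := apply_eq_of_mul_apply_eq hinv2 h25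
  have e1 : A1 ψ = A4 ψ := apply_eq_of_mul_apply_eq hinv4 h41
  have e13 : (A1 * A3) ψ = A2 ψ := apply_eq_of_mul_apply_eq hinv2 (by rwa [← mul_assoc])
  have e3 : A3 ψ = A1 (A2 ψ) := apply_eq_of_mul_apply_eq hinv1 e13
  have e54 : A5 (A4 ψ) = A6 ψ := 
    apply_eq_of_mul_apply_eq (v := A5 * A4) hinv6 (by rwa [← mul_assoc])
  have e36 : A3 ψ = -A6 ψ := by rw [apply_eq_of_mul_apply_eq hinv6 h63, map_neg]
  calc (A1 * A5 + A5 * A1) ψ = A1 (A2 ψ) + A5 (A4 ψ) := by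
        rw [add_apply, mul_apply_eq_comp, mul_apply_eq_comp, e5, e1]
    _ = 0 := by rw [← e3, e54, e36, neg_add_cancel]

/-- Maximal violation stabilizer conditions imply {A1,A5}|ψ⟩ = 0. -/
theorem stmt_3 {H : Type*} [NormedAddCommGroup H] [InnerProductSpace ℂ H] [CompleteSpace H]
    (A1 A2 A3 A4 A5 A6 : H →L[ℂ] H)
    (hsa1 : IsSelfAdjoint A1) (hsa2 : IsSelfAdjoint A2) (hsa3 : IsSelfAdjoint A3)
    (hsa4 : IsSelfAdjoint A4) (hsa5 : IsSelfAdjoint A5) (hsa6 : IsSelfAdjoint A6)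
    (hinv1 : A1 * A1 = 1) (hinv2 : A2 * A2 = 1) (hinv3 : A3 * A3 = 1)
    (hinv4 : A4 * A4 = 1) (hinv5 : A5 * A5 = 1) (hinv6 : A6 * A6 = 1)
    (ψ : H) (hψ : ‖ψ‖ = 1)
    (h123 : (A1 * A2 * A3) ψ = ψ) (h132 : (A1 * A3 * A2) ψ = ψ)
    (h213 : (A2 * A1 * A3) ψ = ψ) (h231 : (A2 * A3 * A1) ψ = ψ)
    (h312 : (A3 * A1 * A2) ψ = ψ) (h321 : (A3 * A2 * A1) ψ = ψ)
    (h456 : (A4 * A5 * A6) ψ = ψ) (h465 : (A4 * A6 * A5) ψ = ψ)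
    (h546 : (A5 * A4 * A6) ψ = ψ) (h564 : (A5 * A6 * A4) ψ = ψ)
    (h645 : (A6 * A4 * A5) ψ = ψ) (h654 : (A6 * A5 * A4) ψ = ψ)
    (h14 : (A1 * A4) ψ = ψ) (h41 : (A4 * A1) ψ = ψ)
    (h25 : (A2 * A5) ψ = ψ) (h52 : (A5 * A2) ψ = ψ)
    (h36 : (A3 * A6) ψ = -ψ) (h63 : (A6 * A3) ψ = -ψ) :
    (A1 * A5 + A5 * A1) ψ = 0 :=
  stmt_3_general A1 A2 A3 A4 A5 A6 hinv1 hinv2 hinv4 hinv6 ψ h213 h654 h41 h25 h63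
end

section
/- Under the maximal-violation stabilizer conditions (A_iA_jA_k|ψ⟩ = |ψ⟩ for all permutations of (1,2,3) and (4,5,6); A1A4|ψ⟩ = A4A1|ψ⟩ = A2A5|ψ⟩ = A5A2|ψ⟩ = |ψ⟩; A3A6|ψ⟩ = A6A3|ψ⟩ = -|ψ⟩), all six anticommutators {A1,A5}, {A1,A6}, {A2,A4}, {A2,A6}, {A3,A4}, {A3,A5} annihilate |ψ⟩. -/
/-- All six anticommutators annihilate |ψ⟩. -/
theorem stmt_4 {H : Type*} [NormedAddCommGroup H] [InnerProductSpace ℂ H] [CompleteSpace H]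
    (A1 A2 A3 A4 A5 A6 : H →L[ℂ] H)
    (hsa1 : IsSelfAdjoint A1) (hsa2 : IsSelfAdjoint A2) (hsa3 : IsSelfAdjoint A3)
    (hsa4 : IsSelfAdjoint A4) (hsa5 : IsSelfAdjoint A5) (hsa6 : IsSelfAdjoint A6)
    (hinv1 : A1 * A1 = 1) (hinv2 : A2 * A2 = 1) (hinv3 : A3 * A3 = 1)
    (hinv4 : A4 * A4 = 1) (hinv5 : A5 * A5 = 1) (hinv6 : A6 * A6 = 1)
    (ψ : H) (hψ : ‖ψ‖ = 1)
    (h123 : (A1 * A2 * A3) ψ = ψ) (h132 : (A1 * A3 * A2) ψ = ψ)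
    (h213 : (A2 * A1 * A3) ψ = ψ) (h231 : (A2 * A3 * A1) ψ = ψ)
    (h312 : (A3 * A1 * A2) ψ = ψ) (h321 : (A3 * A2 * A1) ψ = ψ)
    (h456 : (A4 * A5 * A6) ψ = ψ) (h465 : (A4 * A6 * A5) ψ = ψ)
    (h546 : (A5 * A4 * A6) ψ = ψ) (h564 : (A5 * A6 * A4) ψ = ψ)
    (h645 : (A6 * A4 * A5) ψ = ψ) (h654 : (A6 * A5 * A4) ψ = ψ)
    (h14 : (A1 * A4) ψ = ψ) (h41 : (A4 * A1) ψ = ψ)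
    (h25 : (A2 * A5) ψ = ψ) (h52 : (A5 * A2) ψ = ψ)
    (h36 : (A3 * A6) ψ = -ψ) (h63 : (A6 * A3) ψ = -ψ) :
    (A1 * A5 + A5 * A1) ψ = 0 ∧ (A1 * A6 + A6 * A1) ψ = 0 ∧
    (A2 * A4 + A4 * A2) ψ = 0 ∧ (A2 * A6 + A6 * A2) ψ = 0 ∧
    (A3 * A4 + A4 * A3) ψ = 0 ∧ (A3 * A5 + A5 * A3) ψ = 0 := by
  have sq : ∀ (B : H →L[ℂ] H), B * B = 1 → ∀ x : H, B (B x) = x := by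
    intro B hB x
    have := congrArg (fun f : H →L[ℂ] H => f x) hB
    simpa [ContinuousLinearMap.mul_apply] using this
  simp only [ContinuousLinearMap.mul_apply] at h123 h132 h213 h231 h312 h321 h456 h465 h546 h564 h645 h654 h14 h41 h25 h52 h36 h63
  -- single-operator facts
  have e5 : A5 ψ = A2 ψ := by
    have := congrArg (fun x => A2 x) h25; simpa [sq A2 hinv2] using this
  have e4 : A4 ψ = A1 ψ := by
    have := congrArg (fun x => A1 x) h14; simpa [sq A1 hinv1] using this
  have e6 : A6 ψ = -A3 ψ := by
    have := congrArg (fun x => A3 x) h36; simpa [sq A3 hinv3] using this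
  -- pairwise facts from triples
  have p12 : A1 (A2 ψ) = A3 ψ := by
    have := congrArg (fun x => A3 x) h312; simpa [sq A3 hinv3] using this
  have p21 : A2 (A1 ψ) = A3 ψ := by
    have := congrArg (fun x => A3 x) h321; simpa [sq A3 hinv3] using this
  have p13 : A1 (A3 ψ) = A2 ψ := by
    have := congrArg (fun x => A2 x) h213; simpa [sq A2 hinv2] using this
  have p31 : A3 (A1 ψ) = A2 ψ := by
    have := congrArg (fun x => A2 x) h231; simpa [sq A2 hinv2] using this
  have p23 : A2 (A3 ψ) = A1 ψ := by
    have := congrArg (fun x => A1 x) h123; simpa [sq A1 hinv1] using this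
  have p32 : A3 (A2 ψ) = A1 ψ := by
    have := congrArg (fun x => A1 x) h132; simpa [sq A1 hinv1] using this
  have p45 : A4 (A5 ψ) = A6 ψ := by
    have := congrArg (fun x => A6 x) h645; simpa [sq A6 hinv6] using this
  have p54 : A5 (A4 ψ) = A6 ψ := by
    have := congrArg (fun x => A6 x) h654; simpa [sq A6 hinv6] using this
  have p46 : A4 (A6 ψ) = A5 ψ := by
    have := congrArg (fun x => A5 x) h546; simpa [sq A5 hinv5] using this
  have p64 : A6 (A4 ψ) = A5 ψ := by
    have := congrArg (fun x => A5 x) h564; simpa [sq A5 hinv5] using this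
  have p56 : A5 (A6 ψ) = A4 ψ := by
    have := congrArg (fun x => A4 x) h456; simpa [sq A4 hinv4] using this
  have p65 : A6 (A5 ψ) = A4 ψ := by
    have := congrArg (fun x => A4 x) h465; simpa [sq A4 hinv4] using this
  refine ⟨?_, ?_, ?_, ?_, ?_, ?_⟩ <;>
    simp only [ContinuousLinearMap.add_apply, ContinuousLinearMap.mul_apply]
  · rw [e5, p12, ← e4, p54, e6]; abel
  · rw [e6, map_neg, p13, ← e4, p64, e5]; abel
  · rw [e4, p21, ← e5, p45, e6]; abel
  · rw [e6, map_neg, p23, ← e5, p65, e4]; abel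
  · rw [e4, p31, show A3 ψ = -A6 ψ by rw [e6]; abel, map_neg, p46, e5]; abel
  · rw [e5, p32, show A3 ψ = -A6 ψ by rw [e6]; abel, map_neg, p56, e4]; abel
end

section
/- Under the maximal-violation stabilizer conditions, the subspace V = span{|ψ⟩, A1|ψ⟩, A5|ψ⟩, A1A5|ψ⟩} is invariant under each of A1, A2, A3, A4, A5, A6. -/
/-- V = span{|ψ⟩, A1|ψ⟩, A5|ψ⟩, A1A5|ψ⟩} is invariant under each A_i. -/
theorem stmt_5 {H : Type*} [NormedAddCommGroup H] [InnerProductSpace ℂ H] [CompleteSpace H]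
    (A1 A2 A3 A4 A5 A6 : H →L[ℂ] H)
    (hsa1 : IsSelfAdjoint A1) (hsa2 : IsSelfAdjoint A2) (hsa3 : IsSelfAdjoint A3)
    (hsa4 : IsSelfAdjoint A4) (hsa5 : IsSelfAdjoint A5) (hsa6 : IsSelfAdjoint A6)
    (hinv1 : A1 * A1 = 1) (hinv2 : A2 * A2 = 1) (hinv3 : A3 * A3 = 1)
    (hinv4 : A4 * A4 = 1) (hinv5 : A5 * A5 = 1) (hinv6 : A6 * A6 = 1)
    (ψ : H) (hψ : ‖ψ‖ = 1)
    (h123 : (A1 * A2 * A3) ψ = ψ) (h132 : (A1 * A3 * A2) ψ = ψ)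
    (h213 : (A2 * A1 * A3) ψ = ψ) (h231 : (A2 * A3 * A1) ψ = ψ)
    (h312 : (A3 * A1 * A2) ψ = ψ) (h321 : (A3 * A2 * A1) ψ = ψ)
    (h456 : (A4 * A5 * A6) ψ = ψ) (h465 : (A4 * A6 * A5) ψ = ψ)
    (h546 : (A5 * A4 * A6) ψ = ψ) (h564 : (A5 * A6 * A4) ψ = ψ)
    (h645 : (A6 * A4 * A5) ψ = ψ) (h654 : (A6 * A5 * A4) ψ = ψ)
    (h14 : (A1 * A4) ψ = ψ) (h41 : (A4 * A1) ψ = ψ)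
    (h25 : (A2 * A5) ψ = ψ) (h52 : (A5 * A2) ψ = ψ)
    (h36 : (A3 * A6) ψ = -ψ) (h63 : (A6 * A3) ψ = -ψ) :
    ∀ v ∈ Submodule.span ℂ ({ψ, A1 ψ, A5 ψ, (A1 * A5) ψ} : Set H),
      A1 v ∈ Submodule.span ℂ ({ψ, A1 ψ, A5 ψ, (A1 * A5) ψ} : Set H) ∧
      A2 v ∈ Submodule.span ℂ ({ψ, A1 ψ, A5 ψ, (A1 * A5) ψ} : Set H) ∧
      A3 v ∈ Submodule.span ℂ ({ψ, A1 ψ, A5 ψ, (A1 * A5) ψ} : Set H) ∧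
      A4 v ∈ Submodule.span ℂ ({ψ, A1 ψ, A5 ψ, (A1 * A5) ψ} : Set H) ∧
      A5 v ∈ Submodule.span ℂ ({ψ, A1 ψ, A5 ψ, (A1 * A5) ψ} : Set H) ∧
      A6 v ∈ Submodule.span ℂ ({ψ, A1 ψ, A5 ψ, (A1 * A5) ψ} : Set H) := by
  
  classical
  simp only [ContinuousLinearMap.mul_apply, ContinuousLinearMap.one_apply] at h123 h132 h213 h231 h312 h321 h456 h465 h546 h564 h645 h654 h14 h41 h25 h52 h36 h63
  have i1 : ∀ x, A1 (A1 x) = x := fun x => by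
    have := congrArg (fun f : H →L[ℂ] H => f x) hinv1; simpa using this
  have i2 : ∀ x, A2 (A2 x) = x := fun x => by
    have := congrArg (fun f : H →L[ℂ] H => f x) hinv2; simpa using this
  have i3 : ∀ x, A3 (A3 x) = x := fun x => by
    have := congrArg (fun f : H →L[ℂ] H => f x) hinv3; simpa using this
  have i4 : ∀ x, A4 (A4 x) = x := fun x => by
    have := congrArg (fun f : H →L[ℂ] H => f x) hinv4; simpa using this
  have i5 : ∀ x, A5 (A5 x) = x := fun x => by
    have := congrArg (fun f : H →L[ℂ] H => f x) hinv5; simpa using this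
  have i6 : ∀ x, A6 (A6 x) = x := fun x => by
    have := congrArg (fun f : H →L[ℂ] H => f x) hinv6; simpa using this
  set S := Submodule.span ℂ ({ψ, A1 ψ, A5 ψ, (A1 * A5) ψ} : Set H) with hS
  have mp : ψ ∈ S := Submodule.subset_span (by simp)
  have m1 : A1 ψ ∈ S := Submodule.subset_span (by simp)
  have m5 : A5 ψ ∈ S := Submodule.subset_span (by simp)
  have m15 : A1 (A5 ψ) ∈ S := by
    have : (A1 * A5) ψ ∈ S := Submodule.subset_span (by simp)
    simpa [ContinuousLinearMap.mul_apply] using this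
  -- derived equalities
  have e41 : A4 ψ = A1 ψ := by have := congrArg A1 h14; rwa [i1] at this
  have e25 : A2 ψ = A5 ψ := by have := congrArg A5 h52; rwa [i5] at this
  have e36 : A3 ψ = -A6 ψ := by
    have := congrArg A6 h63; rw [i6] at this; simpa using this
  have g13 : A1 (A3 ψ) = A2 ψ := by have := congrArg A2 h213; rwa [i2] at this
  have e3 : A3 ψ = A1 (A5 ψ) := by
    have := congrArg A1 g13; rw [i1] at this; rw [this, e25]
  have m3 : A3 ψ ∈ S := by rw [e3]; exact m15
  have m6 : A6 ψ ∈ S := by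
    have : A6 ψ = -A3 ψ := by rw [e36, neg_neg]
    rw [this]; exact S.neg_mem m3
  have m2 : A2 ψ ∈ S := by rw [e25]; exact m5
  have m4 : A4 ψ ∈ S := by rw [e41]; exact m1
  -- A2 facts
  have f21 : A2 (A1 ψ) = A3 ψ := by have := congrArg A3 h321; rwa [i3] at this
  have f23 : A2 (A3 ψ) = A1 ψ := by have := congrArg A1 h123; rwa [i1] at this
  -- A3 facts
  have f31 : A3 (A1 ψ) = A2 ψ := by have := congrArg A2 h231; rwa [i2] at this
  have f32 : A3 (A2 ψ) = A1 ψ := by have := congrArg A1 h132; rwa [i1] at this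
  -- A4/A5/A6 facts
  have f45 : A4 (A5 ψ) = A6 ψ := by have := congrArg A6 h645; rwa [i6] at this
  have f46 : A4 (A6 ψ) = A5 ψ := by have := congrArg A5 h546; rwa [i5] at this
  have f54 : A5 (A4 ψ) = A6 ψ := by have := congrArg A6 h654; rwa [i6] at this
  have f56 : A5 (A6 ψ) = A4 ψ := by have := congrArg A4 h456; rwa [i4] at this
  have f64 : A6 (A4 ψ) = A5 ψ := by have := congrArg A5 h564; rwa [i5] at this
  have f65 : A6 (A5 ψ) = A4 ψ := by have := congrArg A4 h465; rwa [i4] at this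
  -- closure principle
  have key : ∀ (A : H →L[ℂ] H), A ψ ∈ S → A (A1 ψ) ∈ S → A (A5 ψ) ∈ S →
      A (A1 (A5 ψ)) ∈ S → ∀ v ∈ S, A v ∈ S := by
    intro A hp h1 h5 h15 v hv
    have hle : S ≤ Submodule.comap (A : H →ₗ[ℂ] H) S := by
      rw [hS, Submodule.span_le]
      intro x hx
      simp only [Set.mem_insert_iff, Set.mem_singleton_iff] at hx
      rcases hx with rfl | rfl | rfl | rfl <;>
        simpa [Submodule.mem_comap, ContinuousLinearMap.mul_apply]
    exact hle hv
  intro v hv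
  refine ⟨key A1 m1 (by rw [i1]; exact mp) m15 (by rw [i1]; exact m5) v hv,
    key A2 m2 (by rw [f21]; exact m3) (by rw [← e25, i2]; exact mp)
      (by rw [← e3, f23]; exact m1) v hv,
    key A3 m3 (by rw [f31]; exact m2) (by rw [← e25, f32]; exact m1)
      (by rw [← e3, i3]; exact mp) v hv,
    key A4 m4 (by rw [← e41, i4]; exact mp)
      (by rw [f45]; exact m6)
      (by rw [← e3, e36]; simp only [map_neg, f46]; exact S.neg_mem m5) v hv,
    key A5 m5 (by rw [← e41, f54]; exact m6) (by rw [i5]; exact mp)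
      (by rw [← e3, e36]; simp only [map_neg, f56]; rw [e41]; exact S.neg_mem m1) v hv,
    key A6 m6 (by rw [← e41, f64]; exact m5) (by rw [f65]; exact m4)
      (by rw [← e3]; rw [h63]; exact S.neg_mem mp) v hv⟩
end

section
/- Under the maximal-violation stabilizer conditions, the commutator [A1, A2] annihilates each of the four vectors |ψ⟩, A1|ψ⟩, A5|ψ⟩, A1A5|ψ⟩, and hence vanishes on the subspace V they span. -/
/-- The commutator [A1,A2] annihilates the four spanning vectors, hence vanishes on V. -/
theorem stmt_6 {H : Type*} [NormedAddCommGroup H] [InnerProductSpace ℂ H] [CompleteSpace H]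
    (A1 A2 A3 A4 A5 A6 : H →L[ℂ] H)
    (hsa1 : IsSelfAdjoint A1) (hsa2 : IsSelfAdjoint A2) (hsa3 : IsSelfAdjoint A3)
    (hsa4 : IsSelfAdjoint A4) (hsa5 : IsSelfAdjoint A5) (hsa6 : IsSelfAdjoint A6)
    (hinv1 : A1 * A1 = 1) (hinv2 : A2 * A2 = 1) (hinv3 : A3 * A3 = 1)
    (hinv4 : A4 * A4 = 1) (hinv5 : A5 * A5 = 1) (hinv6 : A6 * A6 = 1)
    (ψ : H) (hψ : ‖ψ‖ = 1)
    (h123 : (A1 * A2 * A3) ψ = ψ) (h132 : (A1 * A3 * A2) ψ = ψ)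
    (h213 : (A2 * A1 * A3) ψ = ψ) (h231 : (A2 * A3 * A1) ψ = ψ)
    (h312 : (A3 * A1 * A2) ψ = ψ) (h321 : (A3 * A2 * A1) ψ = ψ)
    (h456 : (A4 * A5 * A6) ψ = ψ) (h465 : (A4 * A6 * A5) ψ = ψ)
    (h546 : (A5 * A4 * A6) ψ = ψ) (h564 : (A5 * A6 * A4) ψ = ψ)
    (h645 : (A6 * A4 * A5) ψ = ψ) (h654 : (A6 * A5 * A4) ψ = ψ)
    (h14 : (A1 * A4) ψ = ψ) (h41 : (A4 * A1) ψ = ψ)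
    (h25 : (A2 * A5) ψ = ψ) (h52 : (A5 * A2) ψ = ψ)
    (h36 : (A3 * A6) ψ = -ψ) (h63 : (A6 * A3) ψ = -ψ) :
    (A1 * A2 - A2 * A1) ψ = 0 ∧ (A1 * A2 - A2 * A1) (A1 ψ) = 0 ∧
    (A1 * A2 - A2 * A1) (A5 ψ) = 0 ∧ (A1 * A2 - A2 * A1) ((A1 * A5) ψ) = 0 ∧
    ∀ v ∈ Submodule.span ℂ ({ψ, A1 ψ, A5 ψ, (A1 * A5) ψ} : Set H),
      (A1 * A2 - A2 * A1) v = 0 := by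

  have i1 : ∀ x, A1 (A1 x) = x := fun x => by
    have := ContinuousLinearMap.ext_iff.mp hinv1 x; simpa using this
  have i2 : ∀ x, A2 (A2 x) = x := fun x => by
    have := ContinuousLinearMap.ext_iff.mp hinv2 x; simpa using this
  have i3 : ∀ x, A3 (A3 x) = x := fun x => by
    have := ContinuousLinearMap.ext_iff.mp hinv3 x; simpa using this
  have i5 : ∀ x, A5 (A5 x) = x := fun x => by
    have := ContinuousLinearMap.ext_iff.mp hinv5 x; simpa using this
  simp only [ContinuousLinearMap.mul_apply] at h123 h213 h312 h321 h52 ⊢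
  simp only [ContinuousLinearMap.sub_apply, ContinuousLinearMap.mul_apply]
  -- A3 ψ = A2 (A1 ψ)
  have e3 : A3 ψ = A2 (A1 ψ) := by
    have := congrArg A3 h321; rw [i3] at this; exact this.symm
  -- A3 ψ = A1 (A2 ψ)
  have e3' : A3 ψ = A1 (A2 ψ) := by
    have := congrArg A3 h312; rw [i3] at this; exact this.symm
  -- A5 ψ = A2 ψ
  have e5 : A5 ψ = A2 ψ := by
    have := congrArg A5 h52; rw [i5] at this; exact this.symm
  have c1 : A1 (A2 ψ) - A2 (A1 ψ) = 0 := by rw [← e3, ← e3', sub_self]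
  have c2 : A1 (A2 (A1 ψ)) - A2 (A1 (A1 ψ)) = 0 := by
    rw [i1]
    have h : A2 (A1 (A2 (A1 ψ))) = ψ := by rw [← e3]; exact h213
    have := congrArg A2 h; rw [i2] at this; rw [this, sub_self]
  have key : A2 (A1 (A2 ψ)) = A1 ψ := by
    have h : A1 (A2 (A1 (A2 ψ))) = ψ := by rw [← e3']; exact h123
    have := congrArg A1 h; rw [i1] at this; exact this
  have c3 : A1 (A2 (A5 ψ)) - A2 (A1 (A5 ψ)) = 0 := by
    rw [e5, i2, key, sub_self]
  have c4 : A1 (A2 (A1 (A5 ψ))) - A2 (A1 (A1 (A5 ψ))) = 0 := by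
    rw [e5, i1, i2]
    have h : A1 (A2 (A1 (A2 ψ))) = ψ := by rw [← e3']; exact h123
    rw [h, sub_self]
  refine ⟨c1, c2, c3, c4, ?_⟩
  intro v hv
  have hle : Submodule.span ℂ ({ψ, A1 ψ, A5 ψ, A1 (A5 ψ)} : Set H) ≤
      LinearMap.ker ((A1 * A2 - A2 * A1 : H →L[ℂ] H) : H →ₗ[ℂ] H) := by
    rw [Submodule.span_le]
    rintro x (rfl | rfl | rfl | rfl) <;>
      simp only [SetLike.mem_coe, LinearMap.mem_ker, ContinuousLinearMap.coe_coe,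
        ContinuousLinearMap.sub_apply, ContinuousLinearMap.mul_apply]
    · exact c1
    · exact c2
    · exact c3
    · exact c4
  exact hle hv
end

section
/- Under the maximal-violation stabilizer conditions, the commutator [A1, A4] annihilates each of |ψ⟩, A1|ψ⟩, A5|ψ⟩, and A1A5|ψ⟩. -/
/-- The commutator [A1,A4] annihilates each of the four spanning vectors. -/
theorem stmt_7 {H : Type*} [NormedAddCommGroup H] [InnerProductSpace ℂ H] [CompleteSpace H]
    (A1 A2 A3 A4 A5 A6 : H →L[ℂ] H)
    (hsa1 : IsSelfAdjoint A1) (hsa2 : IsSelfAdjoint A2) (hsa3 : IsSelfAdjoint A3)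
    (hsa4 : IsSelfAdjoint A4) (hsa5 : IsSelfAdjoint A5) (hsa6 : IsSelfAdjoint A6)
    (hinv1 : A1 * A1 = 1) (hinv2 : A2 * A2 = 1) (hinv3 : A3 * A3 = 1)
    (hinv4 : A4 * A4 = 1) (hinv5 : A5 * A5 = 1) (hinv6 : A6 * A6 = 1)
    (ψ : H) (hψ : ‖ψ‖ = 1)
    (h123 : (A1 * A2 * A3) ψ = ψ) (h132 : (A1 * A3 * A2) ψ = ψ)
    (h213 : (A2 * A1 * A3) ψ = ψ) (h231 : (A2 * A3 * A1) ψ = ψ)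
    (h312 : (A3 * A1 * A2) ψ = ψ) (h321 : (A3 * A2 * A1) ψ = ψ)
    (h456 : (A4 * A5 * A6) ψ = ψ) (h465 : (A4 * A6 * A5) ψ = ψ)
    (h546 : (A5 * A4 * A6) ψ = ψ) (h564 : (A5 * A6 * A4) ψ = ψ)
    (h645 : (A6 * A4 * A5) ψ = ψ) (h654 : (A6 * A5 * A4) ψ = ψ)
    (h14 : (A1 * A4) ψ = ψ) (h41 : (A4 * A1) ψ = ψ)
    (h25 : (A2 * A5) ψ = ψ) (h52 : (A5 * A2) ψ = ψ)
    (h36 : (A3 * A6) ψ = -ψ) (h63 : (A6 * A3) ψ = -ψ) :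
    (A1 * A4 - A4 * A1) ψ = 0 ∧ (A1 * A4 - A4 * A1) (A1 ψ) = 0 ∧
    (A1 * A4 - A4 * A1) (A5 ψ) = 0 ∧ (A1 * A4 - A4 * A1) ((A1 * A5) ψ) = 0 := by
  have i1 : ∀ x, A1 (A1 x) = x := fun x => by
    simpa using ContinuousLinearMap.ext_iff.mp hinv1 x
  have i2 : ∀ x, A2 (A2 x) = x := fun x => by
    simpa using ContinuousLinearMap.ext_iff.mp hinv2 x
  have i5 : ∀ x, A5 (A5 x) = x := fun x => by
    simpa using ContinuousLinearMap.ext_iff.mp hinv5 x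
  have i6 : ∀ x, A6 (A6 x) = x := fun x => by
    simpa using ContinuousLinearMap.ext_iff.mp hinv6 x
  simp only [ContinuousLinearMap.mul_apply] at *
  -- A4 ψ = A1 ψ
  have e41 : A4 ψ = A1 ψ := by
    have := congrArg A1 h14; rw [i1] at this; exact this
  have e25 : A2 ψ = A5 ψ := by
    have := congrArg A5 h52; rw [i5] at this; exact this
  have e36 : A3 ψ = -A6 ψ := by
    have := congrArg A6 h63; rw [i6] at this; simpa using this
  have e63 : A6 ψ = -A3 ψ := by rw [e36, neg_neg]
  have e45 : A4 (A5 ψ) = A6 ψ := by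
    have := congrArg A6 h645; rw [i6] at this; exact this
  have e46 : A4 (A6 ψ) = A5 ψ := by
    have := congrArg A5 h546; rw [i5] at this; exact this
  have e13 : A1 (A3 ψ) = A2 ψ := by
    have := congrArg A2 h213; rw [i2] at this; exact this
  have e12 : A1 (A2 ψ) = A3 ψ := by
    have i3 : ∀ x, A3 (A3 x) = x := fun x => by
      simpa using ContinuousLinearMap.ext_iff.mp hinv3 x
    have := congrArg A3 h312; rw [i3] at this; exact this
  have e15 : A1 (A5 ψ) = A3 ψ := by rw [← e25, e12]
  have e16 : A1 (A6 ψ) = -A2 ψ := by rw [e63, map_neg, e13]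
  refine ⟨?_, ?_, ?_, ?_⟩
  · simp [h14, h41]
  · simp only [ContinuousLinearMap.sub_apply, ContinuousLinearMap.mul_apply]
    rw [h41, i1, e41, sub_self]
  · simp only [ContinuousLinearMap.sub_apply, ContinuousLinearMap.mul_apply]
    rw [e45, e16, e15, e36, map_neg, e46, e25, sub_self]
  · simp only [ContinuousLinearMap.sub_apply, ContinuousLinearMap.mul_apply]
    rw [e15, e13, e25, e45, e36, map_neg, e46, map_neg, e15, e36]
    simp
end

section
/- Under the maximal-violation stabilizer conditions, the anticommutator {A1, A5} annihilates each of |ψ⟩, A1|ψ⟩, A5|ψ⟩, and A1A5|ψ⟩, hence vanishes on the invariant subspace V. -/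
/-- The anticommutator {A1,A5} annihilates the four spanning vectors, hence vanishes on V. -/
theorem stmt_8 {H : Type*} [NormedAddCommGroup H] [InnerProductSpace ℂ H] [CompleteSpace H]
    (A1 A2 A3 A4 A5 A6 : H →L[ℂ] H)
    (hsa1 : IsSelfAdjoint A1) (hsa2 : IsSelfAdjoint A2) (hsa3 : IsSelfAdjoint A3)
    (hsa4 : IsSelfAdjoint A4) (hsa5 : IsSelfAdjoint A5) (hsa6 : IsSelfAdjoint A6)
    (hinv1 : A1 * A1 = 1) (hinv2 : A2 * A2 = 1) (hinv3 : A3 * A3 = 1)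
    (hinv4 : A4 * A4 = 1) (hinv5 : A5 * A5 = 1) (hinv6 : A6 * A6 = 1)
    (ψ : H) (hψ : ‖ψ‖ = 1)
    (h123 : (A1 * A2 * A3) ψ = ψ) (h132 : (A1 * A3 * A2) ψ = ψ)
    (h213 : (A2 * A1 * A3) ψ = ψ) (h231 : (A2 * A3 * A1) ψ = ψ)
    (h312 : (A3 * A1 * A2) ψ = ψ) (h321 : (A3 * A2 * A1) ψ = ψ)
    (h456 : (A4 * A5 * A6) ψ = ψ) (h465 : (A4 * A6 * A5) ψ = ψ)
    (h546 : (A5 * A4 * A6) ψ = ψ) (h564 : (A5 * A6 * A4) ψ = ψ)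
    (h645 : (A6 * A4 * A5) ψ = ψ) (h654 : (A6 * A5 * A4) ψ = ψ)
    (h14 : (A1 * A4) ψ = ψ) (h41 : (A4 * A1) ψ = ψ)
    (h25 : (A2 * A5) ψ = ψ) (h52 : (A5 * A2) ψ = ψ)
    (h36 : (A3 * A6) ψ = -ψ) (h63 : (A6 * A3) ψ = -ψ) :
    (A1 * A5 + A5 * A1) ψ = 0 ∧ (A1 * A5 + A5 * A1) (A1 ψ) = 0 ∧
    (A1 * A5 + A5 * A1) (A5 ψ) = 0 ∧ (A1 * A5 + A5 * A1) ((A1 * A5) ψ) = 0 ∧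
    ∀ v ∈ Submodule.span ℂ ({ψ, A1 ψ, A5 ψ, (A1 * A5) ψ} : Set H),
      (A1 * A5 + A5 * A1) v = 0 := by

  have i1 : ∀ x, A1 (A1 x) = x := fun x => by
    have := congrArg (fun f : H →L[ℂ] H => f x) hinv1
    simpa using this
  have i2 : ∀ x, A2 (A2 x) = x := fun x => by
    have := congrArg (fun f : H →L[ℂ] H => f x) hinv2
    simpa using this
  have i3 : ∀ x, A3 (A3 x) = x := fun x => by
    have := congrArg (fun f : H →L[ℂ] H => f x) hinv3
    simpa using this
  have i4 : ∀ x, A4 (A4 x) = x := fun x => by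
    have := congrArg (fun f : H →L[ℂ] H => f x) hinv4
    simpa using this
  have i5 : ∀ x, A5 (A5 x) = x := fun x => by
    have := congrArg (fun f : H →L[ℂ] H => f x) hinv5
    simpa using this
  simp only [ContinuousLinearMap.mul_apply] at h312 h654 h25 h41 h36 ⊢
  have hA5 : A5 ψ = A2 ψ := by
    have := congrArg A2 h25; rwa [i2] at this
  have hA1 : A1 ψ = A4 ψ := by
    have := congrArg A4 h41; rwa [i4] at this
  have hA6 : A6 ψ = -(A3 ψ) := by
    have := congrArg A3 h36; rw [i3] at this; rw [this]; simp
  have h12 : A1 (A2 ψ) = A3 ψ := by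
    have := congrArg A3 h312; rwa [i3] at this
  have h54 : A5 (A4 ψ) = -(A3 ψ) := by
    have := congrArg A6 h654
    have i6 : ∀ x, A6 (A6 x) = x := fun x => by
      have := congrArg (fun f : H →L[ℂ] H => f x) hinv6
      simpa using this
    rw [i6] at this; rw [this, hA6]
  have h0 : (A1 * A5 + A5 * A1) ψ = 0 := by
    simp only [ContinuousLinearMap.add_apply, ContinuousLinearMap.mul_apply]
    rw [hA5, hA1, h12, h54]; simp
  have comm1 : ∀ x, (A1 * A5 + A5 * A1) (A1 x) = A1 ((A1 * A5 + A5 * A1) x) := by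
    intro x
    simp only [ContinuousLinearMap.add_apply, ContinuousLinearMap.mul_apply, map_add, i1]
    rw [add_comm]
  have comm5 : ∀ x, (A1 * A5 + A5 * A1) (A5 x) = A5 ((A1 * A5 + A5 * A1) x) := by
    intro x
    simp only [ContinuousLinearMap.add_apply, ContinuousLinearMap.mul_apply, map_add, i5]
    rw [add_comm]
  have h1 : (A1 * A5 + A5 * A1) (A1 ψ) = 0 := by rw [comm1, h0]; simp
  have h5 : (A1 * A5 + A5 * A1) (A5 ψ) = 0 := by rw [comm5, h0]; simp
  have h15 : (A1 * A5 + A5 * A1) ((A1 * A5) ψ) = 0 := by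
    rw [ContinuousLinearMap.mul_apply, comm1, comm5, h0]; simp
  refine ⟨h0, h1, h5, h15, ?_⟩
  intro v hv
  induction hv using Submodule.span_induction with
  | mem x hx =>
    rcases hx with rfl | rfl | rfl | rfl
    exacts [h0, h1, h5, h15]
  | zero => simp
  | add x y _ _ hx hy => rw [map_add, hx, hy, add_zero]
  | smul c x _ hx => rw [map_smul, hx, smul_zero]
end

section
/- Let A1,...,A6 be Hermitian involutions on a Hilbert space and |ψ⟩ a unit vector satisfying the approximate stabilizer bounds ‖(A_i - A_jA_k)|ψ⟩‖ ≤ 4√ε for all permutations (i,j,k) of (1,2,3) and (4,5,6), ‖(A1-A4)|ψ⟩‖ ≤ 2√ε, ‖(A2-A5)|ψ⟩‖ ≤ 2√ε, and ‖(A3+A6)|ψ⟩‖ ≤ 2√ε. Then ‖(A1A5 + A5A1)|ψ⟩‖ ≤ 14√ε. -/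
private lemma iso_of_sa_inv {H : Type*} [NormedAddCommGroup H] [InnerProductSpace ℂ H]
    [CompleteSpace H] (A : H →L[ℂ] H) (hsa : IsSelfAdjoint A) (hinv : A * A = 1) (v : H) :
    ‖A v‖ = ‖v‖ := by
  have h : (inner ℂ (A v) (A v) : ℂ) = inner ℂ v v := by
    rw [← ContinuousLinearMap.adjoint_inner_left, ← ContinuousLinearMap.star_eq_adjoint,
      hsa.star_eq, ← ContinuousLinearMap.comp_apply, ← ContinuousLinearMap.mul_def, hinv,
      ContinuousLinearMap.one_apply]
  have h2 : ‖A v‖ ^ 2 = ‖v‖ ^ 2 := by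
    rw [← @inner_self_eq_norm_sq ℂ, ← @inner_self_eq_norm_sq ℂ, h]
  rw [← Real.sqrt_sq (norm_nonneg (A v)), ← Real.sqrt_sq (norm_nonneg v), h2]

/-- Approximate stabilizer bounds imply the approximate anticommutation
‖(A1A5 + A5A1)|ψ⟩‖ ≤ 14√ε. -/
theorem stmt_18 {H : Type*} [NormedAddCommGroup H] [InnerProductSpace ℂ H] [CompleteSpace H]
    (A1 A2 A3 A4 A5 A6 : H →L[ℂ] H)
    (hsa1 : IsSelfAdjoint A1) (hsa2 : IsSelfAdjoint A2) (hsa3 : IsSelfAdjoint A3)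
    (hsa4 : IsSelfAdjoint A4) (hsa5 : IsSelfAdjoint A5) (hsa6 : IsSelfAdjoint A6)
    (hinv1 : A1 * A1 = 1) (hinv2 : A2 * A2 = 1) (hinv3 : A3 * A3 = 1)
    (hinv4 : A4 * A4 = 1) (hinv5 : A5 * A5 = 1) (hinv6 : A6 * A6 = 1)
    (ψ : H) (hψ : ‖ψ‖ = 1) (ε : ℝ) (hε : 0 ≤ ε)
    (h123 : ‖(A1 - A2 * A3) ψ‖ ≤ 4 * Real.sqrt ε)
    (h132 : ‖(A1 - A3 * A2) ψ‖ ≤ 4 * Real.sqrt ε)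
    (h213 : ‖(A2 - A1 * A3) ψ‖ ≤ 4 * Real.sqrt ε)
    (h231 : ‖(A2 - A3 * A1) ψ‖ ≤ 4 * Real.sqrt ε)
    (h312 : ‖(A3 - A1 * A2) ψ‖ ≤ 4 * Real.sqrt ε)
    (h321 : ‖(A3 - A2 * A1) ψ‖ ≤ 4 * Real.sqrt ε)
    (h456 : ‖(A4 - A5 * A6) ψ‖ ≤ 4 * Real.sqrt ε)
    (h465 : ‖(A4 - A6 * A5) ψ‖ ≤ 4 * Real.sqrt ε)
    (h546 : ‖(A5 - A4 * A6) ψ‖ ≤ 4 * Real.sqrt ε)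
    (h564 : ‖(A5 - A6 * A4) ψ‖ ≤ 4 * Real.sqrt ε)
    (h645 : ‖(A6 - A4 * A5) ψ‖ ≤ 4 * Real.sqrt ε)
    (h654 : ‖(A6 - A5 * A4) ψ‖ ≤ 4 * Real.sqrt ε)
    (h14 : ‖(A1 - A4) ψ‖ ≤ 2 * Real.sqrt ε)
    (h25 : ‖(A2 - A5) ψ‖ ≤ 2 * Real.sqrt ε)
    (h36 : ‖(A3 + A6) ψ‖ ≤ 2 * Real.sqrt ε) :
    ‖(A1 * A5 + A5 * A1) ψ‖ ≤ 14 * Real.sqrt ε := by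
  have hiso1 := iso_of_sa_inv A1 hsa1 hinv1
  have hiso5 := iso_of_sa_inv A5 hsa5 hinv5
  have key : (A1 * A5 + A5 * A1) ψ =
      A1 ((A5 - A2) ψ) + ((A1 * A2 - A3) ψ) + ((A3 + A6) ψ)
        + ((A5 * A4 - A6) ψ) + A5 ((A1 - A4) ψ) := by
    simp only [ContinuousLinearMap.add_apply, ContinuousLinearMap.sub_apply,
      ContinuousLinearMap.mul_apply, map_sub, map_add]
    abel
  have e1 : ‖A1 ((A5 - A2) ψ)‖ ≤ 2 * Real.sqrt ε := by
    rw [hiso1]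
    calc ‖(A5 - A2) ψ‖ = ‖(A2 - A5) ψ‖ := by rw [← norm_neg]; congr 1; simp
    _ ≤ 2 * Real.sqrt ε := h25
  have e2 : ‖(A1 * A2 - A3) ψ‖ ≤ 4 * Real.sqrt ε := by
    calc ‖(A1 * A2 - A3) ψ‖ = ‖(A3 - A1 * A2) ψ‖ := by rw [← norm_neg]; congr 1; simp
    _ ≤ 4 * Real.sqrt ε := h312
  have e4 : ‖(A5 * A4 - A6) ψ‖ ≤ 4 * Real.sqrt ε := by
    calc ‖(A5 * A4 - A6) ψ‖ = ‖(A6 - A5 * A4) ψ‖ := by rw [← norm_neg]; congr 1; simp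
    _ ≤ 4 * Real.sqrt ε := h654
  have e5 : ‖A5 ((A1 - A4) ψ)‖ ≤ 2 * Real.sqrt ε := by rw [hiso5]; exact h14
  have step : ‖(A1 * A5 + A5 * A1) ψ‖
      ≤ ‖A1 ((A5 - A2) ψ)‖ + ‖(A1 * A2 - A3) ψ‖ + ‖(A3 + A6) ψ‖
        + ‖(A5 * A4 - A6) ψ‖ + ‖A5 ((A1 - A4) ψ)‖ := by
    rw [key]
    refine (norm_add_le _ _).trans ?_
    gcongr
    refine (norm_add_le _ _).trans ?_
    gcongr
    refine (norm_add_le _ _).trans ?_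
    gcongr
    exact norm_add_le _ _
  linarith [e1, e2, h36, e4, e5]
end
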